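/- (Theorem 3, second part) Fix an integer M ≥ 1 and ε ∈ (0,1). The high-SNR advantage of H-ARQ over fixed-length coding with the same diversity order vanishes: lim_{SNR→∞} [ C_ε^{IR,M}(SNR) − C_ε^M(SNR) ] = 0. -/

import Mathlib

/-!
Let `E` be the expected number of rounds at initial rate `R = M C`. The H-ARQ rate minus `C`
equals `C (M - E) / E`, which lies in `[0, C (M - E)]`, and `M - E ≤ (M - 1) P(X < M)`.
Since every round carries nonnegative mutual information, stopping before round `M` forces the
first `M - 1` rounds to carry more than `M C`, so one of them carries more than `C + C / M`.
Choosing `q` with `C > log₂ snr + q` for all `snr` (possible because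
`log₂ (1 + snr h) ≥ log₂ snr + log₂ h` and `ε > 0`), an exponential gain achieves this with
probability at most `exp (1 - 2^q 2^(C / M))` once `snr ≥ 1`. The gap is therefore
`O(C exp (-2^q 2^(C / M)))`, which tends to `0` because `C → ∞`.
-/

open MeasureTheory ProbabilityTheory Real Filter Topology

/-- Number of IR H-ARQ rounds: `X(R, SNR) = min(M, min{m ≥ 1 : Σ_{i=1}^m log₂(1+SNR·Hᵢ) > R})`
(realized as the infimum of `{M} ∪ {m ≥ 1 : accumulated mutual information exceeds R}`). -/
noncomputable def numRounds {Ω : Type*} (H : ℕ → Ω → ℝ) (M : ℕ) (snr R : ℝ) (ω : Ω) : ℕ :=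
  sInf ({M} ∪ {m | 1 ≤ m ∧ R < ∑ i ∈ Finset.range m, Real.logb 2 (1 + snr * H i ω)})

open Finset

noncomputable def accMutualInfo {Ω : Type*} (H : ℕ → Ω → ℝ) (snr : ℝ) (m : ℕ) (ω : Ω) : ℝ :=
  ∑ i ∈ range m, logb 2 (1 + snr * H i ω)

lemma logb_add_logb_le_logb_one_add_mul {s x : ℝ} (hs : 0 < s) (hx : 0 < x) :
    logb 2 s + logb 2 x ≤ logb 2 (1 + s * x) := by
  rw [← logb_mul hs.ne' hx.ne']
  exact logb_le_logb_of_le one_lt_two (mul_pos hs hx) (by linarith)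

lemma lt_logb_one_add_mul_iff {snr x u : ℝ} (hsnr : 0 < snr) (hx : 0 ≤ x) :
    u < logb 2 (1 + snr * x) ↔ (2 ^ u - 1) / snr < x := by
  rw [lt_logb_iff_rpow_lt one_lt_two (by nlinarith [mul_nonneg hsnr.le hx]), div_lt_iff₀ hsnr]
  constructor <;> intro h <;> linarith

lemma two_rpow_mul_two_rpow_div_sub_one_le {snr q c d : ℝ} (hsnr : 1 ≤ snr)
    (hq : logb 2 snr + q < c) : 2 ^ q * 2 ^ (c / d) - 1 ≤ (2 ^ (c + c / d) - 1) / snr := by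
  have hsnr0 : 0 < snr := by linarith
  have h2c : snr * 2 ^ q ≤ 2 ^ c := by
    rw [← rpow_logb two_pos (by norm_num) hsnr0, ← rpow_add two_pos]
    exact rpow_le_rpow_of_exponent_le one_le_two hq.le
  rw [le_div_iff₀ hsnr0, rpow_add two_pos]
  nlinarith [mul_le_mul_of_nonneg_right h2c (rpow_pos_of_pos two_pos (c / d)).le]

lemma tendsto_mul_exp_neg_mul_two_rpow {k d : ℝ} (hk : 0 < k) (hd : 0 < d) :
    Tendsto (fun x => x * exp (-(k * 2 ^ (x / d)))) atTop (𝓝 0) := by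
  have hb : 0 < k * log 2 / d := by positivity
  have hlim := tendsto_rpow_mul_exp_neg_mul_atTop_nhds_zero 1 _ hb
  simp only [rpow_one] at hlim
  refine squeeze_zero' ((eventually_ge_atTop 0).mono fun x hx => by positivity) ?_ hlim
  filter_upwards [eventually_ge_atTop 0] with x hx
  gcongr
  have hlin := add_one_le_exp (log 2 * (x / d))
  rw [← rpow_def_of_pos two_pos] at hlin
  have : k * log 2 / d * x = k * (log 2 * (x / d)) := by ring
  nlinarith

lemma expMeasure_Iic_zero {r : ℝ} (hr : 0 < r) : expMeasure r (Set.Iic 0) = 0 := by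
  have := isProbabilityMeasure_expMeasure hr
  rw [← ofReal_cdf, cdf_expMeasure_eq hr]
  simp

section

variable {Ω : Type*} {H : ℕ → Ω → ℝ} {M : ℕ} {snr R c : ℝ}

lemma monotone_accMutualInfo {ω : Ω} (hsnr : 0 ≤ snr) (hH : ∀ i, 0 ≤ H i ω) :
    Monotone fun m => accMutualInfo H snr m ω := fun _ _ hmn =>
  sum_le_sum_of_subset_of_nonneg (range_subset_range.2 hmn) fun i _ _ =>
    logb_nonneg one_lt_two (le_add_of_nonneg_right (mul_nonneg hsnr (hH i)))

lemma numRounds_mem (ω : Ω) : numRounds H M snr R ω ∈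
    ({M} ∪ {m | 1 ≤ m ∧ R < accMutualInfo H snr m ω} : Set ℕ) :=
  Nat.sInf_mem ⟨M, Or.inl rfl⟩

lemma numRounds_le (ω : Ω) : numRounds H M snr R ω ≤ M :=
  Nat.sInf_le (Or.inl rfl)

lemma one_le_numRounds (hM : 1 ≤ M) (ω : Ω) : 1 ≤ numRounds H M snr R ω := by
  rcases numRounds_mem (H := H) (M := M) (snr := snr) (R := R) ω with h | h
  · rwa [Set.mem_singleton_iff.1 h]
  · exact h.1

lemma lt_accMutualInfo_of_numRounds_lt {ω : Ω} (hsnr : 0 ≤ snr) (hH : ∀ i, 0 ≤ H i ω)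
    (h : numRounds H M snr R ω < M) : R < accMutualInfo H snr (M - 1) ω := by
  rcases numRounds_mem (H := H) (M := M) (snr := snr) (R := R) ω with hM | ⟨-, hR⟩
  · exact absurd (Set.mem_singleton_iff.1 hM) h.ne
  · exact hR.trans_le (monotone_accMutualInfo hsnr hH (by omega))

lemma sub_numRounds_le_indicator (ω : Ω) : (M : ℝ) - numRounds H M snr R ω ≤
    {ω | numRounds H M snr R ω < M}.indicator (fun _ => (M : ℝ) - 1) ω := by
  rcases numRounds_mem (H := H) (M := M) (snr := snr) (R := R) ω with hM | ⟨h1, -⟩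
  · simp [Set.mem_singleton_iff.1 hM]
  · have hle := numRounds_le (H := H) (M := M) (snr := snr) (R := R) ω
    rcases hle.lt_or_eq with hlt | heq
    · rw [Set.indicator_of_mem (show ω ∈ {ω | numRounds H M snr R ω < M} from hlt)]
      have : (1 : ℝ) ≤ numRounds H M snr R ω := by exact_mod_cast h1
      linarith
    · simp [heq]

variable [MeasurableSpace Ω] {μ : Measure Ω} {X : Ω → ℝ} {r : ℝ}

lemma measurable_accMutualInfo (hmeas : ∀ i, Measurable (H i)) (snr : ℝ) (m : ℕ) :
    Measurable (accMutualInfo H snr m) := by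
  show Measurable fun ω => ∑ i ∈ range m, log (1 + snr * H i ω) / log 2
  fun_prop

lemma measurable_numRounds (hmeas : ∀ i, Measurable (H i)) :
    Measurable (numRounds H M snr R) := by
  have hne : ∀ ω, ∃ m, m ∈ ({M} ∪ {m | 1 ≤ m ∧ R < accMutualInfo H snr m ω} : Set ℕ) :=
    fun _ => ⟨M, Or.inl rfl⟩
  have hfind : numRounds H M snr R = fun ω => Nat.find (hne ω) :=
    funext fun ω => (Nat.sInf_def (hne ω)).trans (by congr)
  rw [hfind]
  refine measurable_find hne fun m => ?_
  exact (MeasurableSet.const (m = M)).union ((MeasurableSet.const (1 ≤ m)).inter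
    (measurableSet_lt measurable_const (measurable_accMutualInfo hmeas snr m)))

lemma ae_pos_of_map_eq_expMeasure (hX : Measurable X) (hr : 0 < r)
    (hlaw : μ.map X = expMeasure r) : ∀ᵐ ω ∂μ, 0 < X ω := by
  have hpos : ∀ᵐ x ∂(expMeasure r), 0 < x := by
    rw [ae_iff]
    simp only [not_lt]
    exact expMeasure_Iic_zero hr
  exact ae_of_ae_map hX.aemeasurable (hlaw ▸ hpos)

variable [IsProbabilityMeasure μ]

lemma measureReal_lt_le_exp_neg (hX : Measurable X) (hr : 0 < r)
    (hlaw : μ.map X = expMeasure r) (t : ℝ) : μ.real {ω | t < X ω} ≤ exp (-(r * t)) := by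
  rcases lt_or_ge t 0 with ht | ht
  · exact measureReal_le_one.trans (one_le_exp (by nlinarith))
  · have := isProbabilityMeasure_expMeasure hr
    have hIoi : μ.real {ω | t < X ω} = (expMeasure r).real (Set.Ioi t) := by
      rw [← hlaw, map_measureReal_apply hX measurableSet_Ioi]
      rfl
    rw [hIoi, ← Set.compl_Iic, probReal_compl_eq_one_sub measurableSet_Iic, ← cdf_eq_real,
      cdf_expMeasure_eq hr, if_pos ht, sub_sub_cancel]

lemma integrable_numRounds (hmeas : ∀ i, Measurable (H i)) :
    Integrable (fun ω => (numRounds H M snr R ω : ℝ)) μ := by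
  refine Integrable.of_bound
    (measurable_from_nat.comp (measurable_numRounds hmeas)).aestronglyMeasurable M
    (ae_of_all _ fun ω => ?_)
  simpa using numRounds_le (H := H) (M := M) (snr := snr) (R := R) ω

lemma one_le_integral_numRounds (hmeas : ∀ i, Measurable (H i)) (hM : 1 ≤ M) :
    1 ≤ ∫ ω, (numRounds H M snr R ω : ℝ) ∂μ := by
  simpa using integral_mono (μ := μ) (integrable_const 1) (integrable_numRounds hmeas)
    fun ω => (Nat.one_le_cast.2 (one_le_numRounds hM ω) : (1 : ℝ) ≤ _)

lemma integral_numRounds_le (hmeas : ∀ i, Measurable (H i)) :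
    ∫ ω, (numRounds H M snr R ω : ℝ) ∂μ ≤ M := by
  simpa using integral_mono (μ := μ) (integrable_numRounds hmeas) (integrable_const (M : ℝ))
    fun ω => (Nat.cast_le.2 (numRounds_le ω) : ((numRounds H M snr R ω : ℕ) : ℝ) ≤ M)

lemma sub_integral_numRounds_le (hmeas : ∀ i, Measurable (H i)) :
    (M : ℝ) - ∫ ω, (numRounds H M snr R ω : ℝ) ∂μ ≤
      ((M : ℝ) - 1) * μ.real {ω | numRounds H M snr R ω < M} := by
  have hA : MeasurableSet {ω | numRounds H M snr R ω < M} :=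
    measurableSet_lt (measurable_numRounds hmeas) measurable_const
  have := integral_mono (μ := μ) (f := fun ω => (M : ℝ) - numRounds H M snr R ω)
    ((integrable_const _).sub (integrable_numRounds hmeas))
    ((integrable_const _).indicator hA) sub_numRounds_le_indicator
  rwa [integral_sub (integrable_const _) (integrable_numRounds hmeas), integral_const,
    integral_indicator_const _ hA, probReal_univ, one_smul, smul_eq_mul, mul_comm] at this

lemma measureReal_lt_sum_le_sum {f : ℕ → Ω → ℝ} {n : ℕ} {u : ℝ} (h : n * u ≤ R) :
    μ.real {ω | R < ∑ i ∈ range n, f i ω} ≤ ∑ i ∈ range n, μ.real {ω | u < f i ω} := by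
  refine (measureReal_mono (fun ω hω => ?_) (measure_ne_top _ _)).trans
    (measureReal_biUnion_finset_le _ _)
  have hsum : ∑ _i ∈ range n, u < ∑ i ∈ range n, f i ω := by
    rw [sum_const, card_range, nsmul_eq_mul]
    exact h.trans_lt hω
  obtain ⟨i, hi, hlt⟩ := exists_lt_of_sum_lt hsum
  exact Set.mem_biUnion hi hlt

lemma measureReal_lt_logb_le (hX : Measurable X) (hr : 0 < r)
    (hlaw : μ.map X = expMeasure r) (hsnr : 0 < snr) (u : ℝ) :
    μ.real {ω | u < logb 2 (1 + snr * X ω)} ≤ exp (-(r * ((2 ^ u - 1) / snr))) := by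
  have hsub : {ω | u < logb 2 (1 + snr * X ω)} ≤ᵐ[μ] {ω | (2 ^ u - 1) / snr < X ω} := by
    filter_upwards [ae_pos_of_map_eq_expMeasure hX hr hlaw] with ω hω
    exact (lt_logb_one_add_mul_iff hsnr hω.le).1
  exact (ENNReal.toReal_mono (measure_ne_top _ _) (measure_mono_ae hsub)).trans
    (measureReal_lt_le_exp_neg hX hr hlaw _)

lemma measureReal_lt_accMutualInfo_le (hmeas : ∀ i, Measurable (H i)) (hr : 0 < r)
    (hlaw : ∀ i, μ.map (H i) = expMeasure r) (hsnr : 0 < snr) {n : ℕ} {u : ℝ} (h : n * u ≤ R) :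
    μ.real {ω | R < accMutualInfo H snr n ω} ≤ n * exp (-(r * ((2 ^ u - 1) / snr))) := by
  refine (measureReal_lt_sum_le_sum h).trans ?_
  simpa using sum_le_sum fun i (_ : i ∈ range n) =>
    measureReal_lt_logb_le (hmeas i) hr (hlaw i) hsnr u

lemma exists_measureReal_le_lt {Z : Ω → ℝ} (hZ : Measurable Z) {ε : ℝ} (hε : 0 < ε) :
    ∃ q, μ.real {ω | Z ω ≤ q} < ε := by
  have := Measure.isProbabilityMeasure_map (μ := μ) hZ.aemeasurable
  obtain ⟨q, hq⟩ := ((tendsto_cdf_atBot (μ.map Z)).eventually (gt_mem_nhds hε)).exists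
  refine ⟨q, ?_⟩
  rwa [cdf_eq_real, map_measureReal_apply hZ measurableSet_Iic] at hq

lemma exists_logb_add_lt_of_outage (hmeas : ∀ i, Measurable (H i))
    (hpos : ∀ᵐ ω ∂μ, ∀ i, 0 < H i ω) (hM : 0 < M) {ε : ℝ} (hε : 0 < ε) {C : ℝ → ℝ}
    (hC : ∀ snr > 0, μ.real {ω | 1 / (M : ℝ) * accMutualInfo H snr M ω ≤ C snr} = ε) :
    ∃ q, ∀ snr > 0, logb 2 snr + q < C snr := by
  have hZ : Measurable fun ω => ∑ i ∈ range M, logb 2 (H i ω) := by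
    show Measurable fun ω => ∑ i ∈ range M, log (H i ω) / log 2
    fun_prop
  obtain ⟨q, hq⟩ := exists_measureReal_le_lt (μ := μ) hZ hε
  have hMpos : (0 : ℝ) < M := Nat.cast_pos.2 hM
  refine ⟨q / M, fun snr hsnr => lt_of_not_ge fun hle => (hq.trans_le ?_).false⟩
  rw [← hC snr hsnr]
  refine ENNReal.toReal_mono (measure_ne_top _ _) (measure_mono_ae ?_)
  filter_upwards [hpos] with ω hω hout
  have hlow : M * logb 2 snr + ∑ i ∈ range M, logb 2 (H i ω) ≤ accMutualInfo H snr M ω := by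
    simpa [sum_add_distrib, accMutualInfo] using sum_le_sum fun i (_ : i ∈ range M) =>
      logb_add_logb_le_logb_one_add_mul hsnr (hω i)
  have hup : accMutualInfo H snr M ω ≤ M * logb 2 snr + q := by
    replace hout : 1 / (M : ℝ) * accMutualInfo H snr M ω ≤ C snr := hout
    rw [div_mul_eq_mul_div, one_mul, div_le_iff₀ hMpos] at hout
    have := mul_le_mul_of_nonneg_left hle hMpos.le
    rw [mul_add, mul_div_cancel₀ _ hMpos.ne'] at this
    linarith
  show ∑ i ∈ range M, logb 2 (H i ω) ≤ q
  linarith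

lemma le_mul_div_integral_numRounds (hmeas : ∀ i, Measurable (H i)) (hM : 1 ≤ M) (hc : 0 ≤ c) :
    c ≤ M * c / ∫ ω, (numRounds H M snr (M * c) ω : ℝ) ∂μ := by
  have hE := one_le_integral_numRounds (μ := μ) (snr := snr) (R := M * c) hmeas hM
  rw [le_div_iff₀ (by linarith)]
  nlinarith [integral_numRounds_le (μ := μ) (M := M) (snr := snr) (R := M * c) hmeas]

lemma mul_div_integral_numRounds_sub_le {q : ℝ} (hmeas : ∀ i, Measurable (H i)) (hr : 0 < r)
    (hlaw : ∀ i, μ.map (H i) = expMeasure r) (hpos : ∀ᵐ ω ∂μ, ∀ i, 0 < H i ω) (hM : 1 ≤ M)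
    (hsnr : 1 ≤ snr) (hc : 0 < c) (hq : logb 2 snr + q < c) :
    M * c / ∫ ω, (numRounds H M snr (M * c) ω : ℝ) ∂μ - c ≤
      ((M : ℝ) - 1) ^ 2 * exp r * (c * exp (-(r * 2 ^ q * 2 ^ (c / M)))) := by
  set E := ∫ ω, (numRounds H M snr (M * c) ω : ℝ) ∂μ
  have hE : 1 ≤ E := one_le_integral_numRounds hmeas hM
  have hMpos : (0 : ℝ) < M := Nat.cast_pos.2 hM
  have hM1 : (0 : ℝ) ≤ M - 1 := sub_nonneg.2 (Nat.one_le_cast.2 hM)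
  have hthreshold : ((M - 1 : ℕ) : ℝ) * (c + c / M) ≤ M * c := by
    have : ((M : ℝ) - 1) * (c + c / M) = M * c - c / M := by field_simp; ring
    rw [Nat.cast_sub hM, Nat.cast_one, this]
    linarith [div_nonneg hc.le hMpos.le]
  have hexponent : r * (2 ^ q * 2 ^ (c / M) - 1) ≤ r * ((2 ^ (c + c / M) - 1) / snr) :=
    mul_le_mul_of_nonneg_left (two_rpow_mul_two_rpow_div_sub_one_le hsnr hq) hr.le
  have hearly : μ.real {ω | numRounds H M snr (M * c) ω < M} ≤
      (M - 1) * exp r * exp (-(r * 2 ^ q * 2 ^ (c / M))) := by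
    calc μ.real {ω | numRounds H M snr (M * c) ω < M}
        ≤ μ.real {ω | M * c < accMutualInfo H snr (M - 1) ω} := by
          refine ENNReal.toReal_mono (measure_ne_top _ _) (measure_mono_ae ?_)
          filter_upwards [hpos] with ω hω
          exact lt_accMutualInfo_of_numRounds_lt (by linarith) fun i => (hω i).le
      _ ≤ ((M - 1 : ℕ) : ℝ) * exp (-(r * ((2 ^ (c + c / M) - 1) / snr))) :=
          measureReal_lt_accMutualInfo_le hmeas hr hlaw (by linarith) hthreshold
      _ ≤ (M - 1) * exp r * exp (-(r * 2 ^ q * 2 ^ (c / M))) := by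
          rw [Nat.cast_sub hM, Nat.cast_one, mul_assoc, ← exp_add]
          gcongr
          linarith
  calc M * c / E - c = c * (M - E) / E := by field_simp
    _ ≤ c * (M - E) := div_le_self (mul_nonneg hc.le
        (sub_nonneg.2 (integral_numRounds_le hmeas))) hE
    _ ≤ c * ((M - 1) * μ.real {ω | numRounds H M snr (M * c) ω < M}) := by
        gcongr
        exact sub_integral_numRounds_le hmeas
    _ ≤ c * ((M - 1) * ((M - 1) * exp r * exp (-(r * 2 ^ q * 2 ^ (c / M))))) := by gcongr
    _ = ((M : ℝ) - 1) ^ 2 * exp r * (c * exp (-(r * 2 ^ q * 2 ^ (c / M)))) := by ring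

end

theorem harq_advantage_vanishes_high_snr_general
    {Ω : Type*} [MeasurableSpace Ω] (μ : Measure Ω) [IsProbabilityMeasure μ]
    (H : ℕ → Ω → ℝ) (hmeas : ∀ i, Measurable (H i))
    (hdist : ∀ i, Measure.map (H i) μ = expMeasure 1)
    (M : ℕ) (hM : 1 ≤ M) (ε : ℝ) (hε : ε ∈ Set.Ioo (0:ℝ) 1)
    (C : ℝ → ℝ)
    (hC : ∀ snr > (0:ℝ), 0 < C snr ∧
      (μ {ω | (1 / (M:ℝ)) * ∑ i ∈ Finset.range M,
          Real.logb 2 (1 + snr * H i ω) ≤ C snr}).toReal = ε) :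
    Tendsto
      (fun snr : ℝ =>
        ((M : ℝ) * C snr) / (∫ ω, (numRounds H M snr ((M : ℝ) * C snr) ω : ℝ) ∂μ) - C snr)
      atTop (𝓝 0) := by
  have hpos : ∀ᵐ ω ∂μ, ∀ i, 0 < H i ω :=
    ae_all_iff.2 fun i => ae_pos_of_map_eq_expMeasure (hmeas i) one_pos (hdist i)
  obtain ⟨q, hq⟩ :=
    exists_logb_add_lt_of_outage hmeas hpos hM hε.1 fun snr hsnr => (hC snr hsnr).2
  have hC_top : Tendsto C atTop atTop :=
    tendsto_atTop_mono' _ ((eventually_gt_atTop 0).mono fun snr hsnr => (hq snr hsnr).le)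
      (tendsto_atTop_add_const_right _ q (tendsto_logb_atTop one_lt_two))
  have hbound := ((tendsto_mul_exp_neg_mul_two_rpow (k := 1 * 2 ^ q) (by positivity)
    (Nat.cast_pos.2 hM)).comp hC_top).const_mul (((M : ℝ) - 1) ^ 2 * exp 1)
  rw [mul_zero] at hbound
  refine squeeze_zero' ?_ ?_ hbound
  · filter_upwards [eventually_gt_atTop 0] with snr hsnr
    exact sub_nonneg.2 (le_mul_div_integral_numRounds hmeas hM (hC snr hsnr).1.le)
  · filter_upwards [eventually_ge_atTop 1] with snr hsnr
    exact mul_div_integral_numRounds_sub_le hmeas one_pos hdist hpos hM hsnr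
      (hC snr (by linarith)).1 (hq snr (by linarith))

/-- Theorem 3, second part: the high-SNR advantage of H-ARQ over fixed-length
coding of the same diversity order vanishes:
`lim_{SNR→∞} [C_ε^{IR,M}(SNR) − C_ε^M(SNR)] = 0`. -/
theorem harq_advantage_vanishes_high_snr
    {Ω : Type*} [MeasurableSpace Ω] (μ : Measure Ω) [IsProbabilityMeasure μ]
    (H : ℕ → Ω → ℝ) (hmeas : ∀ i, Measurable (H i))
    (hindep : iIndepFun H μ)
    (hdist : ∀ i, Measure.map (H i) μ = expMeasure 1)
    (M : ℕ) (hM : 1 ≤ M) (ε : ℝ) (hε : ε ∈ Set.Ioo (0:ℝ) 1)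
    (C : ℝ → ℝ)
    (hC : ∀ snr > (0:ℝ), 0 < C snr ∧
      (μ {ω | (1 / (M:ℝ)) * ∑ i ∈ Finset.range M,
          Real.logb 2 (1 + snr * H i ω) ≤ C snr}).toReal = ε) :
    Tendsto
      (fun snr : ℝ =>
        ((M : ℝ) * C snr) / (∫ ω, (numRounds H M snr ((M : ℝ) * C snr) ω : ℝ) ∂μ) - C snr)
      atTop (𝓝 0) :=
  harq_advantage_vanishes_high_snr_general μ H hmeas hdist M hM ε hε C hC
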